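/- arXiv:1803.07733 — 4 statements merged into one kernel-verified Lean document; each statement's English description precedes it below -/
import Mathlib

section
/- The polynomial p(x,y,z) = x^4 - x^3(y+z) + x^2yz + x(-y^3 + y^2z + yz^2 - z^3) + y^4 - y^3z - yz^3 + z^4 is nonnegative for all real x, y, z, and it equals zero if and only if x = y = z, or two of the variables are equal and the third is zero. -/
/-! With `u = (x - z)(x + z - y)` and `v = (y - z)(y + z - x)` one has `p = u² - uv + v²`, a positive
definite binary quadratic form in `(u, v)`. Hence `p ≥ 0`, with equality iff `u = v = 0`, and the
four ways of making both products vanish give the four families of zeros. -/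

noncomputable def p3 (x y z : ℝ) : ℝ :=
  x^4 - x^3*(y+z) + x^2*y*z + x*(-y^3 + y^2*z + y*z^2 - z^3) + y^4 - y^3*z - y*z^3 + z^4

section QuadraticForm

variable {R : Type*} [CommRing R] [LinearOrder R] [IsStrictOrderedRing R]

-- `4 (a² - ab + b²) = (2a - b)² + 3b²`
theorem sq_sub_mul_add_sq_nonneg (a b : R) : 0 ≤ a ^ 2 - a * b + b ^ 2 := by
  nlinarith [sq_nonneg (2 * a - b), sq_nonneg b]

theorem sq_sub_mul_add_sq_eq_zero_iff {a b : R} : a ^ 2 - a * b + b ^ 2 = 0 ↔ a = 0 ∧ b = 0 := by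
  refine ⟨fun h => ?_, fun ⟨ha, hb⟩ => by simp [ha, hb]⟩
  have hb : b = 0 := by
    apply pow_eq_zero_iff two_ne_zero |>.mp
    nlinarith [sq_nonneg (2 * a - b), sq_nonneg b]
  subst hb
  exact ⟨pow_eq_zero_iff two_ne_zero |>.mp (by simpa using h), rfl⟩

end QuadraticForm

theorem p3_eq (x y z : ℝ) :
    p3 x y z = ((x - z) * (x + z - y)) ^ 2 - ((x - z) * (x + z - y)) * ((y - z) * (y + z - x))
      + ((y - z) * (y + z - x)) ^ 2 := by
  unfold p3; ring

theorem p3_nonneg (x y z : ℝ) : 0 ≤ p3 x y z :=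
  p3_eq x y z ▸ sq_sub_mul_add_sq_nonneg _ _

theorem p3_eq_zero_iff (x y z : ℝ) :
    p3 x y z = 0 ↔ (x - z) * (x + z - y) = 0 ∧ (y - z) * (y + z - x) = 0 := by
  rw [p3_eq, sq_sub_mul_add_sq_eq_zero_iff]

theorem stmt_4 (x y z : ℝ) :
    0 ≤ p3 x y z ∧
    (p3 x y z = 0 ↔
      (x = y ∧ y = z) ∨ (x = y ∧ z = 0) ∨ (x = z ∧ y = 0) ∨ (y = z ∧ x = 0)) := by
  refine ⟨p3_nonneg x y z, ?_⟩
  rw [p3_eq_zero_iff, mul_eq_zero, mul_eq_zero]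
  constructor
  · rintro ⟨hxz | hy, hyz | hx⟩
    · exact .inl ⟨by linarith, by linarith⟩
    · exact .inr <| .inr <| .inl ⟨by linarith, by linarith⟩
    · exact .inr <| .inr <| .inr ⟨by linarith, by linarith⟩
    · exact .inr <| .inl ⟨by linarith, by linarith⟩
  · rintro (⟨rfl, rfl⟩ | ⟨rfl, rfl⟩ | ⟨rfl, rfl⟩ | ⟨rfl, rfl⟩) <;> simp
end

section
/- For real numbers a, b, c with 0 < a and 0 < b ≤ c, the quantity p(-a,b,c) + q(b,-a,c) is negative unless it is zero, and equals -2[(c-b)(c^3 + c^2 b + c b^2 + 3b^3 + a(c^2 + cb + 2b^2)) + a^3(a+c)]; in particular p(-a,b,c) + q(b,-a,c) < 0. -/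
noncomputable def q3 (x y z : ℝ) : ℝ :=
  5*x^4 - 3*x^3*(y+z) + x^2*y*z + x*(y^3 - y^2*z - y*z^2 + z^3) - 3*y^4 + 3*y^3*z + 3*y*z^3 - 3*z^4

theorem p3_neg_add_q3_neg (a b c : ℝ) :
    p3 (-a) b c + q3 b (-a) c =
      -(2*((c-b)*(c^3 + c^2*b + c*b^2 + 3*b^3 + a*(c^2 + c*b + 2*b^2)) + a^3*(a+c))) := by
  simp only [p3, q3]
  ring

theorem stmt_6 (a b c : ℝ) (ha : 0 < a) (hb : 0 < b) (hbc : b ≤ c) :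
    p3 (-a) b c + q3 b (-a) c =
      -(2*((c-b)*(c^3 + c^2*b + c*b^2 + 3*b^3 + a*(c^2 + c*b + 2*b^2)) + a^3*(a+c))) ∧
    p3 (-a) b c + q3 b (-a) c < 0 := by
  refine ⟨p3_neg_add_q3_neg a b c, ?_⟩
  rw [p3_neg_add_q3_neg, neg_lt_zero]
  have hc : 0 < c := hb.trans_le hbc
  have hcb : 0 ≤ c - b := sub_nonneg.2 hbc
  exact mul_pos two_pos (add_pos_of_nonneg_of_pos (mul_nonneg hcb (by positivity)) (by positivity))
end

section
/- For real numbers a, b, c with 0 < a and 0 < b ≤ c, the quantity 3·q(-a,b,c) + 5·q(b,-a,c) equals -2[(c-b)(12c^3 + 5c^2 b + 5cb^2 + 8b^3 + a(9c^2 + 5cb + 6b^2)) + a^2(bc + a(3c - 2b))] and is strictly negative. -/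
theorem three_mul_q3_neg_add_five_mul_q3_eq (a b c : ℝ) :
    3 * q3 (-a) b c + 5 * q3 b (-a) c =
      -(2*((c-b)*(12*c^3 + 5*c^2*b + 5*c*b^2 + 8*b^3 + a*(9*c^2 + 5*c*b + 6*b^2))
          + a^2*(b*c + a*(3*c - 2*b)))) := by
  unfold q3
  ring

theorem q3_combination_bracket_pos {a b c : ℝ} (ha : 0 < a) (hb : 0 < b) (hbc : b ≤ c) :
    0 < (c-b)*(12*c^3 + 5*c^2*b + 5*c*b^2 + 8*b^3 + a*(9*c^2 + 5*c*b + 6*b^2))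
          + a^2*(b*c + a*(3*c - 2*b)) := by
  have hc : 0 < c := hb.trans_le hbc
  have hcb : 0 ≤ c - b := sub_nonneg.mpr hbc
  have h3cb : 0 < 3*c - 2*b := by linarith
  have hfirst : 0 ≤ (c-b)*(12*c^3 + 5*c^2*b + 5*c*b^2 + 8*b^3 + a*(9*c^2 + 5*c*b + 6*b^2)) := by
    positivity
  have hsecond : 0 < a^2*(b*c + a*(3*c - 2*b)) := by positivity
  exact add_pos_of_nonneg_of_pos hfirst hsecond

theorem stmt_7 (a b c : ℝ) (ha : 0 < a) (hb : 0 < b) (hbc : b ≤ c) :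
    3 * q3 (-a) b c + 5 * q3 b (-a) c =
      -(2*((c-b)*(12*c^3 + 5*c^2*b + 5*c*b^2 + 8*b^3 + a*(9*c^2 + 5*c*b + 6*b^2))
          + a^2*(b*c + a*(3*c - 2*b)))) ∧
    3 * q3 (-a) b c + 5 * q3 b (-a) c < 0 := by
  rw [three_mul_q3_neg_add_five_mul_q3_eq]
  exact ⟨rfl, neg_neg_of_pos (mul_pos two_pos (q3_combination_bracket_pos ha hb hbc))⟩
end

section
/- Let γ > 0 and let f₁(0), f₂(0) > 0 satisfy f₁(0)·f₂(0) = γ and f₁(0) < f₂(0). Set μ = (1/2)·ln((f₁(0)+f₂(0))/(f₂(0)-f₁(0))). Then f₁(t) = sqrt(γ·tanh(t/(3γ) + μ)) solves df₁/dt = (1/6)(f₁^{-1} - γ^{-2}·f₁³) on [0,∞) with initial value f₁(0), and f₂(t) = γ/f₁(t) = sqrt(γ·coth(t/(3γ) + μ)). -/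
/-!
With `x = f₁(0)/f₂(0) ∈ (0, 1)` one has `μ = artanh x`, so `tanh μ = x` and
`γ tanh μ = f₁(0)²`. The differential equation is the chain rule with `tanh' = 1 - tanh²`,
rewritten through `tanh = f₁²/γ`.
-/

open Real

theorem Real.hasDerivAt_tanh (x : ℝ) : HasDerivAt tanh (1 - tanh x ^ 2) x := by
  have hcosh : cosh x ≠ 0 := (cosh_pos x).ne'
  rw [show tanh = sinh / cosh from funext tanh_eq_sinh_div_cosh]
  refine (hasDerivAt_sinh x).div (hasDerivAt_cosh x) hcosh |>.congr_deriv ?_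
  rw [Pi.div_apply]
  field_simp

theorem Real.tanh_pos {x : ℝ} (hx : 0 < x) : 0 < tanh x := by
  rw [tanh_eq_sinh_div_cosh]
  exact div_pos (sinh_pos_iff.mpr hx) (cosh_pos x)

theorem half_log_div_eq_artanh {a b : ℝ} (hab : |a| < b) :
    1 / 2 * log ((a + b) / (b - a)) = artanh (a / b) := by
  have hb : 0 < b := (abs_nonneg a).trans_lt hab
  have hmem : a / b ∈ Set.Icc (-1) 1 := by
    rw [abs_lt] at hab
    constructor <;> [rw [le_div_iff₀ hb]; rw [div_le_iff₀ hb]] <;> linarith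
  rw [artanh_eq_half_log hmem]
  congr 2
  field_simp
  ring

theorem div_sqrt_mul_eq_sqrt_mul_inv {γ : ℝ} (hγ : 0 ≤ γ) (x : ℝ) :
    γ / √(γ * x) = √(γ * x⁻¹) := by
  rw [sqrt_mul hγ, sqrt_mul hγ, sqrt_inv]
  nth_rw 1 [← mul_self_sqrt hγ]
  rcases eq_or_ne √γ 0 with h | h
  · simp [h]
  · rw [mul_div_mul_left _ _ h, div_eq_mul_inv]

theorem hasDerivAt_sqrt_mul_tanh {γ μ t : ℝ} (h : 0 < γ * tanh (t / (3 * γ) + μ)) :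
    HasDerivAt (fun s => √(γ * tanh (s / (3 * γ) + μ)))
      ((1 / 6) * ((√(γ * tanh (t / (3 * γ) + μ)))⁻¹
        - (γ ^ 2)⁻¹ * √(γ * tanh (t / (3 * γ) + μ)) ^ 3)) t := by
  have hγ : γ ≠ 0 := by rintro rfl; simp at h
  have hu : HasDerivAt (fun s => s / (3 * γ) + μ) (1 / (3 * γ)) t := by
    simpa using ((hasDerivAt_id t).div_const (3 * γ)).add_const μ
  refine (((hasDerivAt_tanh _).comp t hu).const_mul γ).sqrt h.ne' |>.congr_deriv ?_
  simp only [Function.comp_apply]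
  set f := √(γ * tanh (t / (3 * γ) + μ)) with hf
  have hf0 : 0 < f := sqrt_pos.mpr h
  have htanh : tanh (t / (3 * γ) + μ) = f ^ 2 / γ := by
    rw [hf, sq_sqrt h.le]; field_simp
  rw [htanh]
  field_simp
  ring

theorem stmt_14 (γ f10 f20 : ℝ) (hγ : 0 < γ) (hf10 : 0 < f10) (hf20 : 0 < f20)
    (hprod : f10 * f20 = γ) (hlt : f10 < f20)
    (μ : ℝ) (hμ : μ = (1/2) * Real.log ((f10 + f20) / (f20 - f10)))
    (f₁ f₂ : ℝ → ℝ)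
    (hf1 : ∀ t, f₁ t = Real.sqrt (γ * Real.tanh (t / (3 * γ) + μ)))
    (hf2 : ∀ t, f₂ t = γ / f₁ t) :
    (∀ t : ℝ, 0 ≤ t →
      HasDerivAt f₁ ((1/6) * ((f₁ t)⁻¹ - (γ^2)⁻¹ * (f₁ t)^3)) t) ∧
    f₁ 0 = f10 ∧
    (∀ t : ℝ, 0 ≤ t →
      f₂ t = Real.sqrt (γ * (Real.cosh (t / (3 * γ) + μ) / Real.sinh (t / (3 * γ) + μ)))) := by
  have hratio : f10 / f20 ∈ Set.Ioo 0 1 := ⟨by positivity, (div_lt_one hf20).mpr hlt⟩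
  rw [half_log_div_eq_artanh (by rwa [abs_of_pos hf10])] at hμ
  have htanhμ : tanh μ = f10 / f20 := hμ ▸ tanh_artanh ⟨by linarith [hratio.1], hratio.2⟩
  refine ⟨fun t ht => ?_, ?_, fun t _ => ?_⟩
  · have hu : 0 < t / (3 * γ) + μ :=
      add_pos_of_nonneg_of_pos (by positivity) (hμ ▸ artanh_pos hratio)
    rw [hf1 t, funext hf1]
    exact hasDerivAt_sqrt_mul_tanh (mul_pos hγ (tanh_pos hu))
  · have hγ_tanhμ : γ * (f10 / f20) = f10 ^ 2 := by
      rw [← hprod]; field_simp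
    rw [hf1, zero_div, zero_add, htanhμ, hγ_tanhμ, sqrt_sq hf10.le]
  · rw [hf2, hf1, div_sqrt_mul_eq_sqrt_mul_inv hγ.le, tanh_eq_sinh_div_cosh, inv_div]
end
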